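/- Let X be a set and K : X × X → ℂ a bounded function satisfying condition (A1). Then the following are equivalent: (i) K satisfies condition (A4); (ii) for every n, all pairwise distinct x₁, …, xₙ ∈ X, every continuous V : ℂⁿ → [0,∞), every continuous nondecreasing φ : [0,∞) → [0,∞) with lim_{t→∞} φ(t) = ∞, and every μ > 0, there exists c₀ ∈ ℓ¹(X) with support contained in {x₁, …, xₙ} such that V(Φ(c₀)(x₁), …, Φ(c₀)(xₙ)) + μ φ(‖c₀‖_{ℓ¹(X)}) ≤ V(Φ(c)(x₁), …, Φ(c)(xₙ)) + μ φ(‖c‖_{ℓ¹(X)}) for every c ∈ ℓ¹(X). -/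

import Mathlib

/-!
(A4) extends from points `xₙ₊₁` outside `{x₁, …, xₙ}` to every `t ∈ X`, since at `t = xᵢ` the
vector `K[x]⁻¹ K_x(t)` is a unit vector. Hence for `c ∈ ℓ¹(X)` the vector
`a = K[x]⁻¹ Φ(c)(x) = ∑ₜ c_t K[x]⁻¹ K_x(t)` reproduces the values of `Φ(c)` at the `xᵢ` and has
`‖a‖₁ ≤ ‖c‖₁`, so a minimizer of the coercive finite-dimensional problem
`a ↦ V(K[x] a) + μ φ(‖a‖₁)` is a minimizer over all of `ℓ¹(X)`.

Conversely, given `x₁, …, xₙ₊₁`, put `N = K[x]⁻¹`, `a = N K_x(xₙ₊₁)` and take `V v = ‖a - N v‖₁`,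
`φ = id`, `μ = 1`. Comparing the supported minimizer, with coefficients `b`, against the unit mass
at `xₙ₊₁` gives `‖a - b‖₁ + ‖b‖₁ ≤ 1`, hence `‖a‖₁ ≤ 1`.
-/

open Matrix Filter Topology

/-- The kernel matrix `K[x]`, with `(j,k)` entry `K(x_k, x_j)`. -/
noncomputable def kernelMatrix {X : Type*} (K : X → X → ℂ) {n : ℕ} (x : Fin n → X) :
    Matrix (Fin n) (Fin n) ℂ := Matrix.of fun j k => K (x k) (x j)

/-- The vector `K_x(t)`, with `j`-th entry `K(t, x_j)`. -/
noncomputable def kernelVec {X : Type*} (K : X → X → ℂ) {n : ℕ} (x : Fin n → X) (t : X) :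
    Fin n → ℂ := fun j => K t (x j)

/-- The `ℓ¹` norm of a vector in `ℂⁿ`. -/
noncomputable def l1norm {n : ℕ} (v : Fin n → ℂ) : ℝ := ∑ j, ‖v j‖

/-- Condition (A1): every kernel matrix at finitely many pairwise distinct points is
nonsingular. -/
def CondA1 {X : Type*} (K : X → X → ℂ) : Prop :=
  ∀ (n : ℕ) (x : Fin n → X), Function.Injective x → IsUnit (kernelMatrix K x).det

/-- Condition (A4): for all pairwise distinct `x₁, …, x_{n+1}`,
`‖K[x]⁻¹ K_x(x_{n+1})‖₁ ≤ 1`, where `K[x]`, `K_x` are taken at `x₁, …, xₙ`. -/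
def CondA4 {X : Type*} (K : X → X → ℂ) : Prop :=
  ∀ (n : ℕ) (x : Fin (n + 1) → X), Function.Injective x →
    l1norm ((kernelMatrix K (fun i : Fin n => x i.castSucc))⁻¹ *ᵥ
      kernelVec K (fun i : Fin n => x i.castSucc) (x (Fin.last n))) ≤ 1

/-- `Φ(c)(x) = ∑_{t ∈ X} c_t K(t, x)` for `c ∈ ℓ¹(X)`. -/
noncomputable def PhiMap {X : Type*} (K : X → X → ℂ) (c : X → ℂ) (x : X) : ℂ :=
  ∑' t, c t * K t x

lemma l1norm_eq_norm_toLp {n : ℕ} (v : Fin n → ℂ) : l1norm v = ‖WithLp.toLp 1 v‖ := by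
  rw [PiLp.norm_eq_of_L1]; rfl

lemma l1norm_nonneg {n : ℕ} (v : Fin n → ℂ) : 0 ≤ l1norm v :=
  (l1norm_eq_norm_toLp v).symm ▸ norm_nonneg _

lemma continuous_l1norm {n : ℕ} : Continuous (l1norm (n := n)) :=
  (continuous_norm.comp (PiLp.continuous_toLp 1 _)).congr fun v => (l1norm_eq_norm_toLp v).symm

lemma l1norm_zero {n : ℕ} : l1norm (0 : Fin n → ℂ) = 0 := by
  simp [l1norm]

lemma l1norm_le_l1norm_sub_add {n : ℕ} (a b : Fin n → ℂ) :
    l1norm a ≤ l1norm (a - b) + l1norm b := by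
  simpa only [l1norm_eq_norm_toLp, WithLp.toLp_sub] using norm_le_norm_sub_add _ _

lemma norm_le_l1norm {n : ℕ} (v : Fin n → ℂ) : ‖v‖ ≤ l1norm v :=
  (pi_norm_le_iff_of_nonneg (l1norm_nonneg v)).2 fun j =>
    Finset.single_le_sum (fun i _ => norm_nonneg (v i)) (Finset.mem_univ j)

lemma tendsto_l1norm_cocompact_atTop {n : ℕ} :
    Tendsto (l1norm (n := n)) (cocompact _) atTop :=
  tendsto_atTop_mono norm_le_l1norm tendsto_norm_cocompact_atTop

lemma l1norm_single_one {n : ℕ} (i : Fin n) : l1norm (Pi.single i 1) = 1 := by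
  rw [l1norm_eq_norm_toLp, ← PiLp.single, PiLp.norm_single, norm_one]

lemma exists_forall_add_mul_comp_l1norm_le {n : ℕ} {W : (Fin n → ℂ) → ℝ} (hWc : Continuous W)
    (hW0 : ∀ v, 0 ≤ W v) {φ : ℝ → ℝ} (hφc : ContinuousOn φ (Set.Ici 0))
    (hφtop : Tendsto φ atTop atTop) {μ : ℝ} (hμ : 0 < μ) :
    ∃ a₀, ∀ a, W a₀ + μ * φ (l1norm a₀) ≤ W a + μ * φ (l1norm a) := by
  have hpen : Continuous fun a : Fin n → ℂ => μ * φ (l1norm a) :=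
    continuous_const.mul (hφc.comp_continuous continuous_l1norm l1norm_nonneg)
  refine (hWc.add hpen).exists_forall_le ?_
  exact Tendsto.nonneg_add_atTop hW0
    ((hφtop.comp tendsto_l1norm_cocompact_atTop).const_mul_atTop hμ)

section Kernel

variable {X : Type*} {K : X → X → ℂ}

lemma kernelVec_eq_mulVec_single {n : ℕ} (x : Fin n → X) (i : Fin n) :
    kernelVec K x (x i) = kernelMatrix K x *ᵥ Pi.single i 1 := by
  ext j
  simp [kernelVec, kernelMatrix]

lemma inv_kernelMatrix_mulVec_mulVec (hA1 : CondA1 K) {n : ℕ} {x : Fin n → X}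
    (hx : Function.Injective x) (v : Fin n → ℂ) :
    (kernelMatrix K x)⁻¹ *ᵥ (kernelMatrix K x *ᵥ v) = v := by
  rw [mulVec_mulVec, nonsing_inv_mul _ (hA1 n x hx), one_mulVec]

lemma kernelMatrix_mulVec_inv_mulVec (hA1 : CondA1 K) {n : ℕ} {x : Fin n → X}
    (hx : Function.Injective x) (v : Fin n → ℂ) :
    kernelMatrix K x *ᵥ ((kernelMatrix K x)⁻¹ *ᵥ v) = v := by
  rw [mulVec_mulVec, mul_nonsing_inv _ (hA1 n x hx), one_mulVec]

lemma l1norm_inv_mulVec_kernelVec_le_one (hA1 : CondA1 K) (hA4 : CondA4 K) {n : ℕ}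
    {x : Fin n → X} (hx : Function.Injective x) (t : X) :
    l1norm ((kernelMatrix K x)⁻¹ *ᵥ kernelVec K x t) ≤ 1 := by
  by_cases ht : t ∈ Set.range x
  · obtain ⟨i, rfl⟩ := ht
    rw [kernelVec_eq_mulVec_single, inv_kernelMatrix_mulVec_mulVec hA1 hx, l1norm_single_one]
  · simpa using hA4 n (Fin.snoc x t) (Fin.snoc_injective_of_injective hx ht)

lemma summable_mul_of_bounded {M : ℝ} (hK : ∀ s t, ‖K s t‖ ≤ M) {c : X → ℂ}
    (hc : Summable fun t => ‖c t‖) (y : X) : Summable fun t => c t * K t y :=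
  Summable.of_norm_bounded (hc.mul_right M) fun t => by
    rw [norm_mul]
    exact mul_le_mul_of_nonneg_left (hK t y) (norm_nonneg _)

lemma hasSum_smul_kernelVec {M : ℝ} (hK : ∀ s t, ‖K s t‖ ≤ M) {c : X → ℂ}
    (hc : Summable fun t => ‖c t‖) {n : ℕ} (x : Fin n → X) :
    HasSum (fun t => c t • kernelVec K x t) fun i => PhiMap K c (x i) :=
  Pi.hasSum.2 fun i => (summable_mul_of_bounded hK hc (x i)).hasSum

lemma l1norm_mulVec_phiMap_le {M : ℝ} (hK : ∀ s t, ‖K s t‖ ≤ M) {n : ℕ} {x : Fin n → X}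
    {N : Matrix (Fin n) (Fin n) ℂ} (hN : ∀ t, l1norm (N *ᵥ kernelVec K x t) ≤ 1) {c : X → ℂ}
    (hc : Summable fun t => ‖c t‖) :
    l1norm (N *ᵥ fun i => PhiMap K c (x i)) ≤ ∑' t, ‖c t‖ := by
  have hsum := (hasSum_smul_kernelVec hK hc x).map
    ((WithLp.linearEquiv 1 ℂ (Fin n → ℂ)).symm.toLinearMap ∘ₗ N.mulVecLin)
    ((PiLp.continuous_toLp 1 _).comp (continuous_const.matrix_mulVec continuous_id))
  rw [l1norm_eq_norm_toLp]
  refine hsum.norm_le_of_bounded hc.hasSum fun t => ?_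
  change ‖WithLp.toLp 1 (N *ᵥ (c t • kernelVec K x t))‖ ≤ ‖c t‖
  rw [mulVec_smul, WithLp.toLp_smul, norm_smul, ← l1norm_eq_norm_toLp]
  exact mul_le_of_le_one_right (norm_nonneg _) (hN t)

lemma exists_mulVec_eq_phiMap_l1norm_le {M : ℝ} (hK : ∀ s t, ‖K s t‖ ≤ M) (hA1 : CondA1 K)
    (hA4 : CondA4 K) {n : ℕ} {x : Fin n → X} (hx : Function.Injective x) {c : X → ℂ}
    (hc : Summable fun t => ‖c t‖) :
    ∃ a, kernelMatrix K x *ᵥ a = (fun i => PhiMap K c (x i)) ∧ l1norm a ≤ ∑' t, ‖c t‖ :=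
  ⟨_, kernelMatrix_mulVec_inv_mulVec hA1 hx _,
    l1norm_mulVec_phiMap_le hK (l1norm_inv_mulVec_kernelVec_le_one hA1 hA4 hx) hc⟩

lemma phiMap_eq_mulVec_of_support_subset {n : ℕ} {x : Fin n → X} (hx : Function.Injective x)
    {c : X → ℂ} (hc : Function.support c ⊆ Set.range x) :
    (fun i => PhiMap K c (x i)) = kernelMatrix K x *ᵥ (c ∘ x) := by
  ext j
  rw [PhiMap, ← hx.tsum_eq ((Function.support_mul_subset_left _ _).trans hc), tsum_fintype]
  simp [mulVec, dotProduct, kernelMatrix, mul_comm]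

lemma tsum_norm_eq_l1norm_of_support_subset {n : ℕ} {x : Fin n → X}
    (hx : Function.Injective x) {c : X → ℂ} (hc : Function.support c ⊆ Set.range x) :
    ∑' t, ‖c t‖ = l1norm (c ∘ x) := by
  rw [← hx.tsum_eq (by simpa using hc), tsum_fintype]
  rfl

lemma phiMap_single_one [DecidableEq X] (t s : X) : PhiMap K (Pi.single t 1) s = K t s := by
  rw [PhiMap, tsum_eq_single t fun t' ht' => by simp [ht']]
  simp

end Kernel

lemma hasSum_norm_single_one {X : Type*} [DecidableEq X] (t : X) :
    HasSum (fun t' => ‖(Pi.single t 1 : X → ℂ) t'‖) 1 := by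
  simpa using hasSum_single (f := fun t' => ‖(Pi.single t 1 : X → ℂ) t'‖) t fun t' ht' => by
    simp [ht']

def RepresenterProperty {X : Type*} (K : X → X → ℂ) : Prop :=
  ∀ (n : ℕ) (x : Fin n → X), Function.Injective x →
    ∀ V : (Fin n → ℂ) → ℝ, Continuous V → (∀ v, 0 ≤ V v) →
    ∀ φ : ℝ → ℝ, ContinuousOn φ (Set.Ici 0) → MonotoneOn φ (Set.Ici 0) →
      (∀ t ∈ Set.Ici (0 : ℝ), 0 ≤ φ t) → Tendsto φ atTop atTop →
    ∀ μ : ℝ, 0 < μ →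
    ∃ c₀ : X → ℂ, Summable (fun t => ‖c₀ t‖) ∧
      (∀ t, c₀ t ≠ 0 → ∃ i, t = x i) ∧
      ∀ c : X → ℂ, Summable (fun t => ‖c t‖) →
        V (fun i => PhiMap K c₀ (x i)) + μ * φ (∑' t, ‖c₀ t‖) ≤
          V (fun i => PhiMap K c (x i)) + μ * φ (∑' t, ‖c t‖)

section Representer

variable {X : Type*} {K : X → X → ℂ}

theorem representerProperty_of_condA4 {M : ℝ} (hK : ∀ s t, ‖K s t‖ ≤ M) (hA1 : CondA1 K)
    (hA4 : CondA4 K) : RepresenterProperty K := by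
  intro n x hx V hVc hV0 φ hφc hφm _ hφtop μ hμ
  obtain ⟨a₀, ha₀⟩ := exists_forall_add_mul_comp_l1norm_le
    (hVc.comp (continuous_const.matrix_mulVec continuous_id)) (fun a => hV0 (kernelMatrix K x *ᵥ a))
    hφc hφtop hμ
  set c₀ := Function.extend x a₀ 0
  have hsupp : Function.support c₀ ⊆ Set.range x := fun t ht => by
    by_contra h
    exact ht (Function.extend_apply' _ _ _ h)
  have hc₀x : c₀ ∘ x = a₀ := funext (hx.extend_apply a₀ 0)
  refine ⟨c₀, summable_of_hasFiniteSupport ((Set.finite_range x).subset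
      (by simpa using hsupp)), fun t ht => (hsupp ht).imp fun _ => Eq.symm, fun c hc => ?_⟩
  obtain ⟨a, hKa, ha⟩ := exists_mulVec_eq_phiMap_l1norm_le hK hA1 hA4 hx hc
  rw [phiMap_eq_mulVec_of_support_subset hx hsupp, tsum_norm_eq_l1norm_of_support_subset hx hsupp,
    hc₀x, ← hKa]
  calc _ ≤ V (kernelMatrix K x *ᵥ a) + μ * φ (l1norm a) := ha₀ a
    _ ≤ _ := by
      gcongr
      exact hφm (l1norm_nonneg a) ((l1norm_nonneg a).trans ha) ha

theorem condA4_of_representerProperty (hA1 : CondA1 K) (h : RepresenterProperty K) :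
    CondA4 K := by
  classical
  intro n x hx
  set x' : Fin n → X := fun i => x i.castSucc
  have hx' : Function.Injective x' := hx.comp (Fin.castSucc_injective n)
  set t := x (Fin.last n)
  set N := (kernelMatrix K x')⁻¹
  set a := N *ᵥ kernelVec K x' t
  obtain ⟨c₀, -, hc₀, hmin⟩ := h n x' hx' (fun v => l1norm (a - N *ᵥ v))
    (continuous_l1norm.comp (continuous_const.sub (continuous_const.matrix_mulVec continuous_id)))
    (fun _ => l1norm_nonneg _) id continuousOn_id monotoneOn_id (fun _ h => h) tendsto_id 1 one_pos
  have hsupp : Function.support c₀ ⊆ Set.range x' := fun s hs => (hc₀ s hs).imp fun _ => Eq.symm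
  have hδ := hasSum_norm_single_one t
  have hδx' : (fun i => PhiMap K (Pi.single t 1) (x' i)) = kernelVec K x' t :=
    funext fun i => phiMap_single_one t (x' i)
  have key := hmin (Pi.single t 1) hδ.summable
  rw [phiMap_eq_mulVec_of_support_subset hx' hsupp, tsum_norm_eq_l1norm_of_support_subset hx' hsupp,
    inv_kernelMatrix_mulVec_mulVec hA1 hx', hδx', hδ.tsum_eq, sub_self, l1norm_zero] at key
  calc l1norm a ≤ l1norm (a - c₀ ∘ x') + l1norm (c₀ ∘ x') := l1norm_le_l1norm_sub_add _ _
    _ ≤ 1 := by simpa using key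

end Representer

theorem stmt_9 {X : Type*} (K : X → X → ℂ) (M : ℝ)
    (hK : ∀ s t, ‖K s t‖ ≤ M) (hA1 : CondA1 K) :
    CondA4 K ↔
      ∀ (n : ℕ) (x : Fin n → X), Function.Injective x →
        ∀ V : (Fin n → ℂ) → ℝ, Continuous V → (∀ v, 0 ≤ V v) →
        ∀ φ : ℝ → ℝ, ContinuousOn φ (Set.Ici 0) → MonotoneOn φ (Set.Ici 0) →
          (∀ t ∈ Set.Ici (0 : ℝ), 0 ≤ φ t) → Tendsto φ atTop atTop →
        ∀ μ : ℝ, 0 < μ →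
        ∃ c₀ : X → ℂ, Summable (fun t => ‖c₀ t‖) ∧
          (∀ t, c₀ t ≠ 0 → ∃ i, t = x i) ∧
          ∀ c : X → ℂ, Summable (fun t => ‖c t‖) →
            V (fun i => PhiMap K c₀ (x i)) + μ * φ (∑' t, ‖c₀ t‖) ≤
              V (fun i => PhiMap K c (x i)) + μ * φ (∑' t, ‖c t‖) :=
  ⟨representerProperty_of_condA4 hK hA1, condA4_of_representerProperty hA1⟩
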